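/- Let s, n, K be positive integers, let d_{ik} ∈ {0,1} and z_{ik}, z_{ik0} ∈ ℝ^s (i = 1,…,n; k = 1,…,K) be such that for every i there exists k with d_{ik} = 1, and fix an integer N ≥ n. Let β ∈ ℝ^s and p_1, …, p_n > 0 with ∑_i p_i = 1; set α = ∑_{i=1}^n φ_i(β) p_i and w_i = (N − n) φ_i(β) p_i / α. Let β' ∈ ℝ^s be any vector with ℓ₁(β') ≥ ℓ₁(β), where ℓ₁(γ) = ∑_{i=1}^n ∑_{k=1}^K [d_{ik} log g(z_{ik};γ) + (1−d_{ik}) log(1−g(z_{ik};γ)) + w_i log(1−g(z_{ik0};γ))], and set p_i' = (w_i + 1)/N and α' = ∑_{i=1}^n φ_i(β') p_i'. Then ℓ̃_p(N, β', α', {p_i'}) ≥ ℓ̃_p(N, β, α, {p_i}). (EM monotonicity with N fixed.) -/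

import Mathlib

/-- Logistic capture probability `g(z;β) = exp(⟪β,z⟫)/(1 + exp(⟪β,z⟫))`. -/
noncomputable def capProb {s : ℕ} (β z : Fin s → ℝ) : ℝ :=
  Real.exp (∑ j, β j * z j) / (1 + Real.exp (∑ j, β j * z j))

/-- `φ_i(β) = ∏_{k=1}^K (1 − g(z_{ik0};β))`: probability of never being captured. -/
noncomputable def phiNever {s K : ℕ} (β : Fin s → ℝ) (z0 : Fin K → Fin s → ℝ) : ℝ :=
  ∏ k, (1 - capProb β (z0 k))

/-- The log empirical likelihood `ℓ̃_e(N, β, α, {p_i})`. -/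
noncomputable def logEL {s n K : ℕ} (d : Fin n → Fin K → Bool)
    (z : Fin n → Fin K → Fin s → ℝ) (N : ℕ) (β : Fin s → ℝ) (α : ℝ)
    (p : Fin n → ℝ) : ℝ :=
  Real.log (N.choose n) + ((N : ℝ) - n) * Real.log α + ∑ i, Real.log (p i) +
    ∑ i, ∑ k,
      (if d i k then Real.log (capProb β (z i k))
       else Real.log (1 - capProb β (z i k)))

/-- The penalty `f(N) = −(N − Ñ_c)² · 1{N > Ñ_c}`. -/
noncomputable def penalty (Nc : ℝ) (N : ℕ) : ℝ :=
  if Nc < (N : ℝ) then -(((N : ℝ) - Nc) ^ 2) else 0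

/-- The M-step objective `ℓ₁`. -/
noncomputable def ellOne {s n K : ℕ} (d : Fin n → Fin K → Bool)
    (z z0 : Fin n → Fin K → Fin s → ℝ) (w : Fin n → ℝ) (γ : Fin s → ℝ) : ℝ :=
  ∑ i, ∑ k,
    ((if d i k then Real.log (capProb γ (z i k))
      else Real.log (1 - capProb γ (z i k)))
      + w i * Real.log (1 - capProb γ (z0 i k)))

/-! EM monotonicity is the minorize–maximize argument, and both of its steps are Gibbs'
inequality `∑ aᵢ log bᵢ ≤ ∑ aᵢ log aᵢ` (for `a ≥ 0`, `b > 0` of equal total mass).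
Applied to the normalized vectors `φᵢ(β)pᵢ/α` and `φᵢ(β')p'ᵢ/α'`, with weights `w ∝ φ(β)p` of
mass `N - n`, it shows that `(N - n) log α' - ∑ wᵢ log (φᵢ(β')p'ᵢ)` dominates the same expression
at `(β, p)`. Hence the increase of `ℓ̃_e` is at least the increase of `ℓ₁` plus that of
`∑ (wᵢ + 1) log pᵢ`. The first is nonnegative by the choice of `β'`, the second because
`p' = (w + 1)/N` maximizes `∑ (wᵢ + 1) log qᵢ` over the simplex (Gibbs again). The penalty only
depends on `N`, so it cancels. -/

open Real Finset

lemma one_sub_capProb {s : ℕ} (β z : Fin s → ℝ) :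
    1 - capProb β z = (1 + exp (∑ j, β j * z j))⁻¹ := by
  have : 1 + exp (∑ j, β j * z j) ≠ 0 := by positivity
  unfold capProb
  field_simp
  ring

lemma phiNever_pos {s K : ℕ} (β : Fin s → ℝ) (z0 : Fin K → Fin s → ℝ) :
    0 < phiNever β z0 :=
  prod_pos fun k _ => by rw [one_sub_capProb]; positivity

lemma log_phiNever {s K : ℕ} (β : Fin s → ℝ) (z0 : Fin K → Fin s → ℝ) :
    log (phiNever β z0) = ∑ k, log (1 - capProb β (z0 k)) :=
  log_prod fun k _ => by rw [one_sub_capProb]; positivity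

noncomputable def obsLogLik {s n K : ℕ} (d : Fin n → Fin K → Bool)
    (z : Fin n → Fin K → Fin s → ℝ) (γ : Fin s → ℝ) : ℝ :=
  ∑ i, ∑ k, (if d i k then log (capProb γ (z i k)) else log (1 - capProb γ (z i k)))

lemma logEL_eq {s n K : ℕ} (d : Fin n → Fin K → Bool) (z : Fin n → Fin K → Fin s → ℝ)
    (N : ℕ) (β : Fin s → ℝ) (α : ℝ) (p : Fin n → ℝ) :
    logEL d z N β α p =
      log (N.choose n) + ((N : ℝ) - n) * log α + ∑ i, log (p i) + obsLogLik d z β :=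
  rfl

lemma ellOne_eq {s n K : ℕ} (d : Fin n → Fin K → Bool) (z z0 : Fin n → Fin K → Fin s → ℝ)
    (w : Fin n → ℝ) (γ : Fin s → ℝ) :
    ellOne d z z0 w γ = obsLogLik d z γ + ∑ i, w i * log (phiNever γ (z0 i)) := by
  simp only [ellOne, obsLogLik, sum_add_distrib, log_phiNever, mul_sum]

lemma mul_log_le_mul_log_add_sub {a b : ℝ} (ha : 0 ≤ a) (hb : 0 < b) :
    a * log b ≤ a * log a + (b - a) := by
  rcases ha.eq_or_lt with rfl | ha
  · simpa using hb.le
  have hlog : log b - log a ≤ b / a - 1 := by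
    rw [← log_div hb.ne' ha.ne']
    exact log_le_sub_one_of_pos (div_pos hb ha)
  have hscaled := mul_le_mul_of_nonneg_left hlog ha.le
  have hcancel : a * (b / a - 1) = b - a := by field_simp
  linarith

theorem sum_mul_log_le_sum_mul_log {ι : Type*} [Fintype ι] {a b : ι → ℝ}
    (ha : ∀ i, 0 ≤ a i) (hb : ∀ i, 0 < b i) (hab : ∑ i, a i = ∑ i, b i) :
    ∑ i, a i * log (b i) ≤ ∑ i, a i * log (a i) :=
  calc ∑ i, a i * log (b i)
      ≤ ∑ i, (a i * log (a i) + (b i - a i)) :=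
        sum_le_sum fun i _ => mul_log_le_mul_log_add_sub (ha i) (hb i)
    _ = ∑ i, a i * log (a i) := by
        rw [sum_add_distrib, sum_sub_distrib, hab, sub_self, add_zero]

lemma sum_eq_of_proportional {ι : Type*} [Fintype ι] {A : ℝ} {x w : ι → ℝ}
    (hx : ∑ i, x i ≠ 0) (hw : ∀ i, w i = A * x i / ∑ j, x j) : ∑ i, w i = A := by
  simp only [hw, ← sum_div, ← mul_sum, mul_div_cancel_right₀ _ hx]

theorem sum_mul_log_sub_mul_log_sum_le {ι : Type*} [Fintype ι] [Nonempty ι] {A : ℝ}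
    (hA : 0 ≤ A) {x y w : ι → ℝ} (hx : ∀ i, 0 < x i) (hy : ∀ i, 0 < y i)
    (hw : ∀ i, w i = A * x i / ∑ j, x j) :
    ∑ i, w i * log (y i) - A * log (∑ i, y i) ≤ ∑ i, w i * log (x i) - A * log (∑ i, x i) := by
  have hX : 0 < ∑ i, x i := sum_pos (fun i _ => hx i) univ_nonempty
  have hY : 0 < ∑ i, y i := sum_pos (fun i _ => hy i) univ_nonempty
  have hsumw := sum_eq_of_proportional hX.ne' hw
  have hnormalize : ∀ u : ι → ℝ, (∀ i, 0 < u i) →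
      A * ∑ i, x i / (∑ j, x j) * log (u i / ∑ j, u j) =
        ∑ i, w i * log (u i) - A * log (∑ i, u i) := by
    intro u hu
    have hU : 0 < ∑ i, u i := sum_pos (fun i _ => hu i) univ_nonempty
    calc A * ∑ i, x i / (∑ j, x j) * log (u i / ∑ j, u j)
        = ∑ i, (w i * log (u i) - w i * log (∑ j, u j)) := by
          rw [mul_sum]
          refine sum_congr rfl fun i _ => ?_
          rw [log_div (hu i).ne' hU.ne', hw]
          ring
      _ = ∑ i, w i * log (u i) - A * log (∑ i, u i) := by
          rw [sum_sub_distrib, ← sum_mul, hsumw]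
  have hgibbs := sum_mul_log_le_sum_mul_log (a := fun i => x i / ∑ j, x j)
    (b := fun i => y i / ∑ j, y j) (fun i => (div_pos (hx i) hX).le) (fun i => div_pos (hy i) hY)
    (by simp only [← sum_div, div_self hX.ne', div_self hY.ne'])
  rw [← hnormalize y hy, ← hnormalize x hx]
  exact mul_le_mul_of_nonneg_left hgibbs hA

theorem sum_mul_log_le_sum_mul_log_div_sum {ι : Type*} [Fintype ι] {c q : ι → ℝ}
    (hc : ∀ i, 0 ≤ c i) (hC : 0 < ∑ i, c i) (hq : ∀ i, 0 < q i) (hq1 : ∑ i, q i = 1) :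
    ∑ i, c i * log (q i) ≤ ∑ i, c i * log (c i / ∑ j, c j) := by
  have hrescale : ∀ f : ι → ℝ, (∑ j, c j) * ∑ i, c i / (∑ j, c j) * f i = ∑ i, c i * f i :=
    fun f => by rw [mul_sum]; exact sum_congr rfl fun i _ => by field_simp
  have hgibbs := sum_mul_log_le_sum_mul_log (a := fun i => c i / ∑ j, c j) (b := q)
    (fun i => div_nonneg (hc i) hC.le) hq (by rw [← sum_div, div_self hC.ne', hq1])
  rw [← hrescale, ← hrescale]
  exact mul_le_mul_of_nonneg_left hgibbs hC.le

lemma sum_mul_log_mul {ι : Type*} [Fintype ι] (w : ι → ℝ) {u v : ι → ℝ}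
    (hu : ∀ i, 0 < u i) (hv : ∀ i, 0 < v i) :
    ∑ i, w i * log (u i * v i) = ∑ i, w i * log (u i) + ∑ i, w i * log (v i) := by
  rw [← sum_add_distrib]
  exact sum_congr rfl fun i _ => by rw [log_mul (hu i).ne' (hv i).ne', mul_add]

theorem stmt9_general (s n K : ℕ)
    (d : Fin n → Fin K → Bool) (z z0 : Fin n → Fin K → Fin s → ℝ)
    (N : ℕ) (hN : n ≤ N) (β : Fin s → ℝ)
    (p : Fin n → ℝ) (hp : ∀ i, 0 < p i) (hp1 : ∑ i, p i = 1)
    (α : ℝ) (hα : α = ∑ i, phiNever β (z0 i) * p i)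
    (w : Fin n → ℝ) (hw : ∀ i, w i = ((N : ℝ) - n) * phiNever β (z0 i) * p i / α)
    (β' : Fin s → ℝ) (hβ' : ellOne d z z0 w β ≤ ellOne d z z0 w β')
    (p' : Fin n → ℝ) (hp' : ∀ i, p' i = (w i + 1) / (N : ℝ))
    (α' : ℝ) (hα' : α' = ∑ i, phiNever β' (z0 i) * p' i)
    (Ct : ℝ) (Nc : ℝ) :
    logEL d z N β α p + Ct * penalty Nc N ≤
      logEL d z N β' α' p' + Ct * penalty Nc N := by
  have : Nonempty (Fin n) := by
    by_contra h
    rw [not_nonempty_iff] at h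
    simp at hp1
  have hA : (0 : ℝ) ≤ N - n := sub_nonneg.2 (by exact_mod_cast hN)
  have hx : ∀ i, 0 < phiNever β (z0 i) * p i := fun i => mul_pos (phiNever_pos β (z0 i)) (hp i)
  have hX : 0 < ∑ i, phiNever β (z0 i) * p i := sum_pos (fun i _ => hx i) univ_nonempty
  have hw' : ∀ i, w i = (N - n) * (phiNever β (z0 i) * p i) / ∑ j, phiNever β (z0 j) * p j :=
    fun i => by rw [hw, hα, mul_assoc]
  have hc : ∀ i, 0 < w i + 1 := fun i => by
    have : 0 ≤ w i := by rw [hw']; exact div_nonneg (mul_nonneg hA (hx i).le) hX.le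
    linarith
  have hcount : ∑ i, (w i + 1) = N := by
    rw [sum_add_distrib, sum_eq_of_proportional hX.ne' hw']
    simp
  have hp'eq : ∀ i, p' i = (w i + 1) / ∑ j, (w j + 1) := by rw [hcount]; exact hp'
  have hp'pos : ∀ i, 0 < p' i := fun i => by
    rw [hp'eq]; exact div_pos (hc i) (sum_pos (fun i _ => hc i) univ_nonempty)
  have hE := sum_mul_log_sub_mul_log_sum_le hA hx
    (fun i => mul_pos (phiNever_pos β' (z0 i)) (hp'pos i)) hw'
  rw [← hα, ← hα', sum_mul_log_mul w (fun i => phiNever_pos β' (z0 i)) hp'pos,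
    sum_mul_log_mul w (fun i => phiNever_pos β (z0 i)) hp] at hE
  have hM := sum_mul_log_le_sum_mul_log_div_sum (fun i => (hc i).le)
    (sum_pos (fun i _ => hc i) univ_nonempty) hp hp1
  simp only [← hp'eq] at hM
  simp only [add_mul, one_mul, sum_add_distrib] at hM
  rw [ellOne_eq, ellOne_eq] at hβ'
  rw [logEL_eq, logEL_eq]
  linarith

/-- EM monotonicity with `N` fixed.  One EM iteration — E-step
weights `w_i = (N−n)φ_i(β)p_i/α` with `α = ∑ φ_i(β)p_i`, any `β'` with
`ℓ₁(β') ≥ ℓ₁(β)`, update `p_i' = (w_i+1)/N`, `α' = ∑ φ_i(β')p_i'` — does not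
decrease the penalized log empirical likelihood `ℓ̃_p = ℓ̃_e + C·f(N)`. -/
theorem stmt9 (s n K : ℕ) (hs : 0 < s) (hn : 0 < n) (hK : 0 < K)
    (d : Fin n → Fin K → Bool) (z z0 : Fin n → Fin K → Fin s → ℝ)
    (hcap : ∀ i, ∃ k, d i k = true)
    (N : ℕ) (hN : n ≤ N) (β : Fin s → ℝ)
    (p : Fin n → ℝ) (hp : ∀ i, 0 < p i) (hp1 : ∑ i, p i = 1)
    (α : ℝ) (hα : α = ∑ i, phiNever β (z0 i) * p i)
    (w : Fin n → ℝ) (hw : ∀ i, w i = ((N : ℝ) - n) * phiNever β (z0 i) * p i / α)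
    (β' : Fin s → ℝ) (hβ' : ellOne d z z0 w β ≤ ellOne d z z0 w β')
    (p' : Fin n → ℝ) (hp' : ∀ i, p' i = (w i + 1) / (N : ℝ))
    (α' : ℝ) (hα' : α' = ∑ i, phiNever β' (z0 i) * p' i)
    (Ct : ℝ) (hCt : 0 ≤ Ct) (Nc : ℝ) :
    logEL d z N β α p + Ct * penalty Nc N ≤
      logEL d z N β' α' p' + Ct * penalty Nc N :=
  stmt9_general s n K d z z0 N hN β p hp hp1 α hα w hw β' hβ' p' hp' α' hα' Ct Nc
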